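/- Let V and W be 2m×2m real symmetric matrices written in block form V = [[Vx, Vxp], [Vxpᵀ, Vp]] and W = [[Wx, Wxp], [Wxpᵀ, Wp]] with m×m blocks. Then ‖V − W‖_F² ≥ (Tr V − Tr W)²/(2m) + 2(‖Vxp‖_F − ‖Wxp‖_F)². -/

import Mathlib

open Matrix

noncomputable section

/-- The squared Frobenius norm `‖A‖_F² = Σ_{i,j} A_{ij}²` of a real matrix. -/
def frobSq {n k : Type*} [Fintype n] [Fintype k] (A : Matrix n k ℝ) : ℝ :=
  ∑ i, ∑ j, (A i j) ^ 2

/-- The Frobenius norm `‖A‖_F = √(Σ_{i,j} A_{ij}²)` of a real matrix. -/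
def frobNorm {n k : Type*} [Fintype n] [Fintype k] (A : Matrix n k ℝ) : ℝ :=
  Real.sqrt (frobSq A)

lemma frobSq_nonneg {n k : Type*} [Fintype n] [Fintype k] (A : Matrix n k ℝ) :
    0 ≤ frobSq A := by
  apply Finset.sum_nonneg; intro i _; apply Finset.sum_nonneg; intro j _; positivity

lemma frobSq_transpose {n k : Type*} [Fintype n] [Fintype k] (A : Matrix n k ℝ) :
    frobSq Aᵀ = frobSq A := by
  unfold frobSq
  rw [Finset.sum_comm]
  rfl

/-- View a matrix as a vector in Euclidean space. -/
def toEuc {n k : Type*} [Fintype n] [Fintype k] (A : Matrix n k ℝ) :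
    EuclideanSpace ℝ (n × k) := WithLp.toLp 2 (fun p : n × k => A p.1 p.2)

lemma frobNorm_eq_norm {n k : Type*} [Fintype n] [Fintype k] (A : Matrix n k ℝ) :
    frobNorm A = ‖toEuc A‖ := by
  rw [EuclideanSpace.norm_eq, frobNorm, frobSq]
  congr 1
  rw [Fintype.sum_prod_type]
  simp [toEuc, sq_abs, Real.norm_eq_abs]

lemma frobNorm_sub_le {n k : Type*} [Fintype n] [Fintype k] (A B : Matrix n k ℝ) :
    |frobNorm A - frobNorm B| ≤ frobNorm (A - B) := by
  rw [frobNorm_eq_norm, frobNorm_eq_norm, frobNorm_eq_norm]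
  have : toEuc (A - B) = toEuc A - toEuc B := rfl
  rw [this]
  exact abs_norm_sub_norm_le _ _

lemma frobSq_fromBlocks {n o l p : Type*} [Fintype n] [Fintype o] [Fintype l] [Fintype p]
    (A : Matrix n l ℝ) (B : Matrix n p ℝ) (C : Matrix o l ℝ) (D : Matrix o p ℝ) :
    frobSq (fromBlocks A B C D) = frobSq A + frobSq B + frobSq C + frobSq D := by
  unfold frobSq
  rw [Fintype.sum_sum_type]
  simp only [Fintype.sum_sum_type]
  simp [fromBlocks, Finset.sum_add_distrib]
  ring

lemma trace_fromBlocks' {n o : Type*} [Fintype n] [Fintype o] [DecidableEq n] [DecidableEq o]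
    (A : Matrix n n ℝ) (B : Matrix n o ℝ) (C : Matrix o n ℝ) (D : Matrix o o ℝ) :
    (fromBlocks A B C D).trace = A.trace + D.trace := by
  simp [Matrix.trace, Fintype.sum_sum_type, fromBlocks, Matrix.diag]

/-- For `2m × 2m` real symmetric block matrices `V = [[Vx, Vxp], [Vxpᵀ, Vp]]` and
`W = [[Wx, Wxp], [Wxpᵀ, Wp]]`,
`‖V − W‖_F² ≥ (Tr V − Tr W)²/(2m) + 2(‖Vxp‖_F − ‖Wxp‖_F)²`. -/
theorem frobSq_sub_ge_trace_and_coherence (m : ℕ)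
    (Vx Vxp Vp Wx Wxp Wp : Matrix (Fin m) (Fin m) ℝ)
    (hVsym : (fromBlocks Vx Vxp Vxpᵀ Vp).IsSymm)
    (hWsym : (fromBlocks Wx Wxp Wxpᵀ Wp).IsSymm) :
    ((fromBlocks Vx Vxp Vxpᵀ Vp).trace - (fromBlocks Wx Wxp Wxpᵀ Wp).trace) ^ 2 / (2 * m) +
        2 * (frobNorm Vxp - frobNorm Wxp) ^ 2 ≤
      frobSq (fromBlocks Vx Vxp Vxpᵀ Vp - fromBlocks Wx Wxp Wxpᵀ Wp) := by
  set Dx := Vx - Wx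
  set Dxp := Vxp - Wxp
  set Dp := Vp - Wp
  have hsub : fromBlocks Vx Vxp Vxpᵀ Vp - fromBlocks Wx Wxp Wxpᵀ Wp
      = fromBlocks Dx Dxp Dxpᵀ Dp := by
    ext (i|i) (j|j) <;>
      simp [Dx, Dxp, Dp, fromBlocks, Matrix.sub_apply, Matrix.transpose_apply]
  rw [hsub, frobSq_fromBlocks]
  -- coherence part
  have hcoh : 2 * (frobNorm Vxp - frobNorm Wxp) ^ 2 ≤ frobSq Dxp + frobSq Dxpᵀ := by
    rw [frobSq_transpose]
    have h1 : |frobNorm Vxp - frobNorm Wxp| ≤ frobNorm Dxp := frobNorm_sub_le Vxp Wxp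
    have h2 : (frobNorm Vxp - frobNorm Wxp) ^ 2 ≤ frobNorm Dxp ^ 2 := by
      rw [← sq_abs]
      exact pow_le_pow_left₀ (abs_nonneg _) h1 2
    have h3 : frobNorm Dxp ^ 2 = frobSq Dxp := Real.sq_sqrt (frobSq_nonneg Dxp)
    nlinarith [frobSq_nonneg Dxp]
  -- trace part
  have htr : ((fromBlocks Vx Vxp Vxpᵀ Vp).trace - (fromBlocks Wx Wxp Wxpᵀ Wp).trace) ^ 2 / (2 * m)
      ≤ frobSq Dx + frobSq Dp := by
    have htrd : (fromBlocks Vx Vxp Vxpᵀ Vp).trace - (fromBlocks Wx Wxp Wxpᵀ Wp).trace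
        = (fromBlocks Dx Dxp Dxpᵀ Dp).trace := by
      rw [trace_fromBlocks', trace_fromBlocks', trace_fromBlocks']
      simp [Dx, Dp, Matrix.trace_sub]
      ring
    rw [htrd]
    have hcs : ((fromBlocks Dx Dxp Dxpᵀ Dp).trace) ^ 2
        ≤ (2 * m) * ∑ i, ((fromBlocks Dx Dxp Dxpᵀ Dp).diag i) ^ 2 := by
      have := sq_sum_le_card_mul_sum_sq (s := (Finset.univ : Finset (Fin m ⊕ Fin m)))
        (f := fun i => (fromBlocks Dx Dxp Dxpᵀ Dp).diag i)
      simpa [Matrix.trace, Finset.card_univ, two_mul] using this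
    have hdiag : ∑ i, ((fromBlocks Dx Dxp Dxpᵀ Dp).diag i) ^ 2 ≤ frobSq Dx + frobSq Dp := by
      rw [Fintype.sum_sum_type]
      have hx : ∑ i : Fin m, (Dx i i) ^ 2 ≤ frobSq Dx := by
        apply Finset.sum_le_sum
        intro i _
        exact Finset.single_le_sum (f := fun j => (Dx i j) ^ 2)
          (fun j _ => sq_nonneg _) (Finset.mem_univ i)
      have hp : ∑ i : Fin m, (Dp i i) ^ 2 ≤ frobSq Dp := by
        apply Finset.sum_le_sum
        intro i _
        exact Finset.single_le_sum (f := fun j => (Dp i j) ^ 2)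
          (fun j _ => sq_nonneg _) (Finset.mem_univ i)
      simp only [Matrix.diag, fromBlocks_apply₁₁, fromBlocks_apply₂₂]
      exact add_le_add hx hp
    rcases Nat.eq_zero_or_pos m with hm | hm
    · subst hm
      simp only [Nat.cast_zero, mul_zero, div_zero]
      have := add_nonneg (frobSq_nonneg Dx) (frobSq_nonneg Dp)
      linarith
    · rw [div_le_iff₀ (by positivity)]
      calc ((fromBlocks Dx Dxp Dxpᵀ Dp).trace) ^ 2
          ≤ (2 * m) * ∑ i, ((fromBlocks Dx Dxp Dxpᵀ Dp).diag i) ^ 2 := hcs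
        _ ≤ (2 * m) * (frobSq Dx + frobSq Dp) := by
            apply mul_le_mul_of_nonneg_left hdiag (by positivity)
        _ = (frobSq Dx + frobSq Dp) * (2 * m) := by ring
  linarith
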